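/- Let 0 < ε < 1 and let (f, g) be a closed holomorphic 1-form on the Hartogs figure H_ε, i.e. f, g : ℂ × ℂ → ℂ are holomorphic on H_ε and ∂f/∂w = ∂g/∂z on H_ε. Then there exists a closed holomorphic 1-form (F, G) on the bidisk D (F, G holomorphic on D with ∂F/∂w = ∂G/∂z on D) such that F = f and G = g on H_ε. -/

import Mathlib

/-- The open unit bidisk in `ℂ × ℂ`. -/
def bidisk : Set (ℂ × ℂ) := {p | ‖p.1‖ < 1 ∧ ‖p.2‖ < 1}

/-- The Hartogs figure `H_ε` inside the bidisk. -/
def hartogsFigure (ε : ℝ) : Set (ℂ × ℂ) :=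
  {p | (‖p.1‖ < 1 ∧ ‖p.2‖ < 1) ∧
    (‖p.1‖ < ε ∨ ‖p.2‖ > 1 - ε)}

/-!
Fix `1 - ε < r < 1` and, for `|w| < r`, replace `f` by its Cauchy integral in the second
variable, `(2πi)⁻¹ ∮_{|ζ| = r} f(z, ζ) / (ζ - w) dζ`. The circle `|ζ| = r` lies in the part
`|w| > 1 - ε` of `H_ε`, where every `z` with `|z| < 1` is allowed, so differentiation under the
integral sign makes this jointly holomorphic for `|z| < 1`. It equals `f` for `|z| < ε` by the
Cauchy formula, hence on all of `H_ε` by the identity theorem in `z`. The extended form is closed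
because `∂/∂w` of the integral is `∮ f(z, ζ) / (ζ - w)²`, while `∂/∂z` of the integral for `g` is
`∮ ∂_z g(z, ζ) / (ζ - w) = ∮ ∂_ζ f(z, ζ) / (ζ - w)`, and the two agree after integrating by parts
around the circle.
-/

open Complex Metric Set Filter Topology MeasureTheory Real

section Slices

variable {E : Type*} [NormedAddCommGroup E] [NormedSpace ℂ E]

theorem HasFDerivAt.hasDerivAt_comp_prodMk_const {φ : ℂ × ℂ → E} {L : ℂ × ℂ →L[ℂ] E} {z w : ℂ}
    (h : HasFDerivAt φ L (z, w)) : HasDerivAt (fun z' => φ (z', w)) (L (1, 0)) z := by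
  simpa [Function.comp_def] using (h.comp z (hasFDerivAt_prodMk_left z w)).hasDerivAt

theorem HasFDerivAt.hasDerivAt_comp_const_prodMk {φ : ℂ × ℂ → E} {L : ℂ × ℂ →L[ℂ] E} {z w : ℂ}
    (h : HasFDerivAt φ L (z, w)) : HasDerivAt (fun w' => φ (z, w')) (L (0, 1)) w := by
  simpa [Function.comp_def] using (h.comp w (hasFDerivAt_prodMk_right z w)).hasDerivAt

theorem Filter.EventuallyEq.deriv_comp_prodMk_const {φ ψ : ℂ × ℂ → E} {p : ℂ × ℂ}
    (h : φ =ᶠ[𝓝 p] ψ) : deriv (fun z => φ (z, p.2)) p.1 = deriv (fun z => ψ (z, p.2)) p.1 := by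
  refine EventuallyEq.deriv_eq ?_
  exact (continuous_id.prodMk continuous_const).tendsto' p.1 p rfl |>.eventually h

theorem Filter.EventuallyEq.deriv_comp_const_prodMk {φ ψ : ℂ × ℂ → E} {p : ℂ × ℂ}
    (h : φ =ᶠ[𝓝 p] ψ) : deriv (fun w => φ (p.1, w)) p.2 = deriv (fun w => ψ (p.1, w)) p.2 := by
  refine EventuallyEq.deriv_eq ?_
  exact (continuous_const.prodMk continuous_id).tendsto' p.2 p rfl |>.eventually h

theorem norm_fderiv_apply_one_zero_le {φ : ℂ × ℂ → E} {a ζ : ℂ} {s M : ℝ} (hs : 0 < s)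
    (hd : ∀ η ∈ closedBall a s, DifferentiableAt ℂ φ (η, ζ))
    (hM : ∀ η ∈ sphere a s, ‖φ (η, ζ)‖ ≤ M) :
    ‖fderiv ℂ φ (a, ζ) (1, 0)‖ ≤ M / s := by
  rw [← ((hd a (mem_closedBall_self hs.le)).hasFDerivAt.hasDerivAt_comp_prodMk_const).deriv]
  refine norm_deriv_le_of_forall_mem_sphere_norm_le hs ?_ hM
  refine DifferentiableOn.diffContOnCl_ball (U := closedBall a s) ?_ subset_rfl
  exact fun η hη =>
    ((hd η hη).comp η (hasFDerivAt_prodMk_left η ζ).differentiableAt).differentiableWithinAt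

end Slices

section CircleIntegral

variable {E : Type*} [NormedAddCommGroup E] [NormedSpace ℂ E] [CompleteSpace E]

theorem circleIntegral_sub_inv_smul_deriv {h : ℂ → E} {U : Set ℂ} {c w : ℂ} {R : ℝ}
    (hU : IsOpen U) (hh : DifferentiableOn ℂ h U) (hR : 0 ≤ R) (hsU : sphere c R ⊆ U)
    (hw : w ∉ sphere c R) :
    ∮ ζ in C(c, R), (ζ - w)⁻¹ • deriv h ζ = ∮ ζ in C(c, R), ((ζ - w) ^ 2)⁻¹ • h ζ := by
  have hne : ∀ ζ ∈ sphere c R, ζ - w ≠ 0 := fun ζ hζ h0 => hw (sub_eq_zero.1 h0 ▸ hζ)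
  have hderiv : ∀ ζ ∈ sphere c R, HasDerivAt (fun ζ => (ζ - w)⁻¹ • h ζ)
      ((ζ - w)⁻¹ • deriv h ζ - ((ζ - w) ^ 2)⁻¹ • h ζ) ζ := by
    intro ζ hζ
    have hinv : HasDerivAt (fun ζ => (ζ - w)⁻¹) (-((ζ - w) ^ 2)⁻¹) ζ := by
      simpa [div_eq_inv_mul] using ((hasDerivAt_id ζ).sub_const w).fun_inv (hne ζ hζ)
    convert hinv.fun_smul (hh.differentiableAt (hU.mem_nhds (hsU hζ))).hasDerivAt using 1
    rw [neg_smul, sub_eq_add_neg]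
  have hcont : ContinuousOn (fun ζ => (ζ - w)⁻¹) (sphere c R) :=
    (continuousOn_id.sub continuousOn_const).inv₀ hne
  have h₁ : CircleIntegrable (fun ζ => (ζ - w)⁻¹ • deriv h ζ) c R :=
    (hcont.smul ((hh.deriv hU).continuousOn.mono hsU)).circleIntegrable hR
  have h₂ : CircleIntegrable (fun ζ => ((ζ - w) ^ 2)⁻¹ • h ζ) c R :=
    ((((continuousOn_id.sub continuousOn_const).pow 2).inv₀
      fun ζ hζ => pow_ne_zero 2 (hne ζ hζ)).smul (hh.continuousOn.mono hsU)).circleIntegrable hR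
  rw [← sub_eq_zero, ← circleIntegral.integral_sub h₁ h₂]
  exact circleIntegral.integral_eq_zero_of_hasDerivWithinAt hR fun ζ hζ =>
    (hderiv ζ hζ).hasDerivWithinAt

end CircleIntegral

section ParametricCauchyIntegral

open ContinuousLinearMap

theorem norm_smul_fst_add_smul_snd_le (a b : ℂ) :
    ‖a • fst ℂ ℂ ℂ + b • snd ℂ ℂ ℂ‖ ≤ ‖a‖ + ‖b‖ :=
  calc _ ≤ ‖a‖ * ‖fst ℂ ℂ ℂ‖ + ‖b‖ * ‖snd ℂ ℂ ℂ‖ :=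
        (norm_add_le _ _).trans_eq (by rw [norm_smul, norm_smul])
    _ ≤ ‖a‖ * 1 + ‖b‖ * 1 := by gcongr <;> [exact norm_fst_le ℂ ℂ ℂ; exact norm_snd_le ℂ ℂ ℂ]
    _ = ‖a‖ + ‖b‖ := by ring

theorem hasFDerivAt_sub_snd_inv_smul {φ : ℂ × ℂ → ℂ} {x : ℂ × ℂ} {ζ : ℂ}
    (hφ : DifferentiableAt ℂ φ (x.1, ζ)) (hζ : ζ - x.2 ≠ 0) :
    HasFDerivAt (fun y : ℂ × ℂ => (ζ - y.2)⁻¹ • φ (y.1, ζ))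
      (((ζ - x.2)⁻¹ • fderiv ℂ φ (x.1, ζ) (1, 0)) • fst ℂ ℂ ℂ +
        (((ζ - x.2) ^ 2)⁻¹ • φ (x.1, ζ)) • snd ℂ ℂ ℂ) x := by
  have hinv : HasFDerivAt (fun y : ℂ × ℂ => (ζ - y.2)⁻¹) (((ζ - x.2) ^ 2)⁻¹ • snd ℂ ℂ ℂ) x := by
    simpa [Function.comp_def] using (hasDerivAt_inv hζ).comp_hasFDerivAt x
      ((hasFDerivAt_snd (𝕜 := ℂ) (p := x)).const_sub ζ)
  have hslice : HasFDerivAt (fun y : ℂ × ℂ => φ (y.1, ζ))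
      ((fderiv ℂ φ (x.1, ζ)).comp ((fst ℂ ℂ ℂ).prod 0)) x :=
    hφ.hasFDerivAt.comp x (hasFDerivAt_fst.prodMk (hasFDerivAt_const ζ x))
  refine (hinv.smul hslice).congr_fderiv (ext fun v => ?_)
  have hv : ((v.1, 0) : ℂ × ℂ) = v.1 • ((1 : ℂ), (0 : ℂ)) := by simp
  simp only [add_apply, smul_apply, coe_comp, Function.comp_apply, prod_apply, coe_fst',
    zero_apply, coe_snd', smul_eq_mul, smulRight_apply, hv, map_smul]
  ring

variable {U : Set (ℂ × ℂ)} {c z w : ℂ} {R : ℝ}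

theorem exists_bounds_near_prod_sphere {E : Type*} [NormedAddCommGroup E] [NormedSpace ℂ E]
    {φ : ℂ × ℂ → E} (hU : IsOpen U) (hφ : DifferentiableOn ℂ φ U)
    (hz : {z} ×ˢ sphere c R ⊆ U) :
    ∃ δ > 0, ∃ M, ∀ a ∈ closedBall z δ, ∀ ζ ∈ sphere c R,
      DifferentiableAt ℂ φ (a, ζ) ∧ ‖φ (a, ζ)‖ ≤ M ∧ ‖fderiv ℂ φ (a, ζ) (1, 0)‖ ≤ M / δ := by
  have hK : IsCompact ({z} ×ˢ sphere c R) := isCompact_singleton.prod (isCompact_sphere c R)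
  obtain ⟨δ, hδ, hδU⟩ := hK.exists_cthickening_subset_open hU hz
  obtain ⟨M, hM⟩ := hK.cthickening.exists_bound_of_continuousOn (hφ.continuousOn.mono hδU)
  have hmem : ∀ a ∈ closedBall z δ, ∀ ζ ∈ sphere c R,
      (a, ζ) ∈ cthickening δ ({z} ×ˢ sphere c R) := fun a ha ζ hζ =>
    mem_cthickening_of_dist_le _ (z, ζ) _ _ ⟨rfl, hζ⟩ (by simpa [Prod.dist_eq] using ha)
  have hsub : ∀ a ∈ closedBall z (δ / 2), closedBall a (δ / 2) ⊆ closedBall z δ := by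
    intro a ha η hη
    rw [mem_closedBall] at ha hη ⊢
    linarith [dist_triangle η a z]
  refine ⟨δ / 2, half_pos hδ, M, fun a ha ζ hζ => ⟨?_, ?_, ?_⟩⟩
  · exact hφ.differentiableAt (hU.mem_nhds (hδU (hmem a (hsub a ha (mem_closedBall_self
      (half_pos hδ).le)) ζ hζ)))
  · exact hM _ (hmem a (hsub a ha (mem_closedBall_self (half_pos hδ).le)) ζ hζ)
  · refine norm_fderiv_apply_one_zero_le (half_pos hδ) (fun η hη => ?_) (fun η hη => ?_)
    · exact hφ.differentiableAt (hU.mem_nhds (hδU (hmem η (hsub a ha hη) ζ hζ)))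
    · exact hM _ (hmem η (hsub a ha (sphere_subset_closedBall hη)) ζ hζ)

variable {φ : ℂ × ℂ → ℂ}

theorem exists_nhds_bound_fderiv_sub_snd_inv_smul (hU : IsOpen U)
    (hφ : DifferentiableOn ℂ φ U) (hz : {z} ×ˢ sphere c R ⊆ U) (hw : w ∈ ball c R) :
    ∃ s ∈ 𝓝 (z, w), ∃ C, ∀ x ∈ s, ∀ ζ ∈ sphere c R,
      DifferentiableAt ℂ φ (x.1, ζ) ∧ ζ - x.2 ≠ 0 ∧
      ‖((ζ - x.2)⁻¹ • fderiv ℂ φ (x.1, ζ) (1, 0)) • fst ℂ ℂ ℂ +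
        (((ζ - x.2) ^ 2)⁻¹ • φ (x.1, ζ)) • snd ℂ ℂ ℂ‖ ≤ C := by
  obtain ⟨δ, hδ, M, hbd⟩ := exists_bounds_near_prod_sphere hU hφ hz
  rw [mem_ball] at hw
  set ρ := (R - dist w c) / 2 with hρ_def
  have hρ : 0 < ρ := by linarith
  refine ⟨ball (z, w) (min δ ρ), ball_mem_nhds _ (lt_min hδ hρ),
    ρ⁻¹ * (M / δ) + (ρ ^ 2)⁻¹ * M, fun x hx ζ hζ => ?_⟩
  rw [mem_ball, Prod.dist_eq, max_lt_iff, lt_min_iff, lt_min_iff] at hx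
  obtain ⟨hd, hφM, hfdM⟩ := hbd x.1 (mem_closedBall.2 hx.1.1.le) ζ hζ
  have hρζ : ρ ≤ ‖ζ - x.2‖ := by
    rw [mem_sphere] at hζ
    rw [← dist_eq_norm]
    linarith [dist_triangle ζ x.2 c, dist_triangle x.2 w c, dist_comm ζ x.2, hx.2.2]
  refine ⟨hd, norm_pos_iff.1 (hρ.trans_le hρζ), ?_⟩
  have hM : 0 ≤ M := (norm_nonneg _).trans hφM
  refine (norm_smul_fst_add_smul_snd_le _ _).trans ?_
  rw [norm_smul, norm_smul, norm_inv, norm_inv, norm_pow]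
  gcongr

theorem hasFDerivAt_circleIntegral_sub_snd_inv_smul (hU : IsOpen U)
    (hφ : DifferentiableOn ℂ φ U) (hz : {z} ×ˢ sphere c R ⊆ U) (hw : w ∈ ball c R) :
    HasFDerivAt (fun x : ℂ × ℂ => ∮ ζ in C(c, R), (ζ - x.2)⁻¹ • φ (x.1, ζ))
      ((∮ ζ in C(c, R), (ζ - w)⁻¹ • fderiv ℂ φ (z, ζ) (1, 0)) • fst ℂ ℂ ℂ +
        (∮ ζ in C(c, R), ((ζ - w) ^ 2)⁻¹ • φ (z, ζ)) • snd ℂ ℂ ℂ) (z, w) := by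
  obtain ⟨s, hs, C, hC⟩ := exists_nhds_bound_fderiv_sub_snd_inv_smul hU hφ hz hw
  have hR : 0 < R := pos_of_mem_ball hw
  have hζ : ∀ θ, circleMap c R θ ∈ sphere c R := circleMap_mem_sphere c hR.le
  set F' : ℂ × ℂ → ℝ → ℂ × ℂ →L[ℂ] ℂ := fun x θ =>
    deriv (circleMap c R) θ •
      (((circleMap c R θ - x.2)⁻¹ • fderiv ℂ φ (x.1, circleMap c R θ) (1, 0)) • fst ℂ ℂ ℂ +
        (((circleMap c R θ - x.2) ^ 2)⁻¹ • φ (x.1, circleMap c R θ)) • snd ℂ ℂ ℂ)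
  have hF_int : ∀ x ∈ s, CircleIntegrable (fun ζ => (ζ - x.2)⁻¹ • φ (x.1, ζ)) c R := by
    intro x hx
    refine ContinuousOn.circleIntegrable hR.le (ContinuousOn.fun_smul ?_ fun ζ hζ => ?_)
    · exact (continuousOn_id.sub continuousOn_const).inv₀ fun ζ hζ => (hC x hx ζ hζ).2.1
    · exact ((hC x hx ζ hζ).1.comp ζ (hasFDerivAt_prodMk_right x.1 ζ).differentiableAt)
        |>.continuousAt.continuousWithinAt
  have hbound : ∀ θ, ∀ x ∈ s, ‖F' x θ‖ ≤ |R| * C := fun θ x hx => by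
    rw [norm_smul, deriv_circleMap, norm_mul, norm_circleMap_zero, norm_I, mul_one]
    exact mul_le_mul_of_nonneg_left (hC x hx _ (hζ θ)).2.2 (abs_nonneg R)
  have hF'_meas : AEStronglyMeasurable (F' (z, w)) (volume.restrict (uIoc 0 (2 * π))) := by
    have hfd : Measurable fun θ => fderiv ℂ φ (z, circleMap c R θ) (1, 0) :=
      (measurable_fderiv_apply_const ℂ φ (1, 0)).comp (by fun_prop)
    have hφm : Measurable fun θ => φ (z, circleMap c R θ) :=
      (hφ.continuousOn.comp_continuous (continuous_const.prodMk (continuous_circleMap c R))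
        fun θ => hz ⟨rfl, hζ θ⟩).measurable
    simp only [F', deriv_circleMap, smul_add, smul_smul]
    refine .add (.smul_const ?_ _) (.smul_const ?_ _) <;> refine Measurable.aestronglyMeasurable ?_
    · fun_prop
    · simp only [smul_eq_mul, ← mul_assoc]
      exact Measurable.mul (by fun_prop) hφm
  have hF'_int : IntervalIntegrable (F' (z, w)) volume 0 (2 * π) :=
    intervalIntegrable_const.mono_fun' hF'_meas
      (ae_of_all _ fun θ => hbound θ _ (mem_of_mem_nhds hs))
  have hderiv := intervalIntegral.hasFDerivAt_integral_of_dominated_of_fderiv_le (F' := F') hs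
    (eventually_of_mem hs fun x hx => (hF_int x hx).out.def'.aestronglyMeasurable)
    (hF_int _ (mem_of_mem_nhds hs)).out hF'_meas (ae_of_all _ fun θ _ => hbound θ)
    intervalIntegrable_const (ae_of_all _ fun θ _ x hx =>
      (hasFDerivAt_sub_snd_inv_smul (hC x hx _ (hζ θ)).1 (hC x hx _ (hζ θ)).2.1).const_smul
        (deriv (circleMap c R) θ))
  refine hderiv.congr_fderiv (prod_ext (ext_ring ?_) (ext_ring ?_)).symm <;>
    simp only [coe_comp, Function.comp_apply, inl_apply, inr_apply] <;>
    rw [intervalIntegral_apply hF'_int] <;>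
    simp [F', circleIntegral]

end ParametricCauchyIntegral

theorem isOpen_hartogsFigure (ε : ℝ) : IsOpen (hartogsFigure ε) := by
  have h₁ : Continuous fun p : ℂ × ℂ => ‖p.1‖ := by fun_prop
  have h₂ : Continuous fun p : ℂ × ℂ => ‖p.2‖ := by fun_prop
  exact ((isOpen_lt h₁ continuous_const).inter (isOpen_lt h₂ continuous_const)).inter
    ((isOpen_lt h₁ continuous_const).union (isOpen_lt continuous_const h₂))

noncomputable def cauchyIntegralSnd (r : ℝ) (φ : ℂ × ℂ → ℂ) (p : ℂ × ℂ) : ℂ :=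
  (2 * π * I)⁻¹ • ∮ ζ in C(0, r), (ζ - p.2)⁻¹ • φ (p.1, ζ)

noncomputable def hartogsExtension (r : ℝ) (φ : ℂ × ℂ → ℂ) (p : ℂ × ℂ) : ℂ :=
  if ‖p.2‖ < r then cauchyIntegralSnd r φ p else φ p

section HartogsFigure

variable {ε r : ℝ} {φ : ℂ × ℂ → ℂ} {z w : ℂ}

theorem prod_sphere_subset_hartogsFigure (hr : 1 - ε < r) (hr1 : r < 1) (hz : ‖z‖ < 1) :
    {z} ×ˢ sphere 0 r ⊆ hartogsFigure ε := by
  rintro ⟨a, ζ⟩ ⟨rfl, hζ⟩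
  rw [mem_sphere_zero_iff_norm] at hζ
  exact ⟨⟨hz, hζ ▸ hr1⟩, Or.inr (hζ ▸ hr)⟩

open ContinuousLinearMap in
theorem hasFDerivAt_cauchyIntegralSnd (hr : 1 - ε < r) (hr1 : r < 1)
    (hφ : DifferentiableOn ℂ φ (hartogsFigure ε)) (hz : ‖z‖ < 1) (hw : ‖w‖ < r) :
    HasFDerivAt (cauchyIntegralSnd r φ)
      ((2 * π * I)⁻¹ • ((∮ ζ in C(0, r), (ζ - w)⁻¹ • fderiv ℂ φ (z, ζ) (1, 0)) • fst ℂ ℂ ℂ +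
        (∮ ζ in C(0, r), ((ζ - w) ^ 2)⁻¹ • φ (z, ζ)) • snd ℂ ℂ ℂ)) (z, w) :=
  (hasFDerivAt_circleIntegral_sub_snd_inv_smul (isOpen_hartogsFigure ε) hφ
    (prod_sphere_subset_hartogsFigure hr hr1 hz) (mem_ball_zero_iff.2 hw)).fun_const_smul _

theorem cauchyIntegralSnd_eq_of_norm_fst_lt (hr1 : r < 1)
    (hφ : DifferentiableOn ℂ φ (hartogsFigure ε)) (hz : ‖z‖ < 1) (hzε : ‖z‖ < ε) (hw : ‖w‖ < r) :
    cauchyIntegralSnd r φ (z, w) = φ (z, w) := by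
  have hd : DifferentiableOn ℂ (fun ζ => φ (z, ζ)) (closedBall 0 r) :=
    hφ.comp (by fun_prop) fun ζ hζ =>
      ⟨⟨hz, (mem_closedBall_zero_iff.1 hζ).trans_lt hr1⟩, Or.inl hzε⟩
  rw [cauchyIntegralSnd, hd.circleIntegral_sub_inv_smul (mem_ball_zero_iff.2 hw), smul_smul,
    inv_mul_cancel₀ two_pi_I_ne_zero, one_smul]

theorem cauchyIntegralSnd_eq (hε : 0 < ε) (hr : 1 - ε < r) (hr1 : r < 1)
    (hφ : DifferentiableOn ℂ φ (hartogsFigure ε)) {p : ℂ × ℂ} (hp : p ∈ hartogsFigure ε)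
    (hpr : ‖p.2‖ < r) : cauchyIntegralSnd r φ p = φ p := by
  obtain ⟨z, w⟩ := p
  obtain ⟨⟨hz, hw⟩, hzε | hwε⟩ := hp
  · exact cauchyIntegralSnd_eq_of_norm_fst_lt hr1 hφ hz hzε hpr
  have hu : DifferentiableOn ℂ (fun z' => cauchyIntegralSnd r φ (z', w)) (ball 0 1) :=
    fun z' hz' => (hasFDerivAt_cauchyIntegralSnd hr hr1 hφ (mem_ball_zero_iff.1 hz')
      hpr).hasDerivAt_comp_prodMk_const.differentiableAt.differentiableWithinAt
  have hv : DifferentiableOn ℂ (fun z' => φ (z', w)) (ball 0 1) :=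
    hφ.comp (by fun_prop) fun z' hz' => ⟨⟨mem_ball_zero_iff.1 hz', hw⟩, Or.inr hwε⟩
  have hnear0 : (fun z' => cauchyIntegralSnd r φ (z', w)) =ᶠ[𝓝 0] fun z' => φ (z', w) := by
    filter_upwards [ball_mem_nhds 0 hε, ball_mem_nhds 0 one_pos] with z' hz'ε hz'1
    exact cauchyIntegralSnd_eq_of_norm_fst_lt hr1 hφ (mem_ball_zero_iff.1 hz'1)
      (mem_ball_zero_iff.1 hz'ε) hpr
  exact (hu.analyticOnNhd isOpen_ball).eqOn_of_preconnected_of_eventuallyEq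
    (hv.analyticOnNhd isOpen_ball) (convex_ball 0 1).isPreconnected (mem_ball_self one_pos)
    hnear0 (mem_ball_zero_iff.2 hz)

theorem hartogsExtension_eqOn (hε : 0 < ε) (hr : 1 - ε < r) (hr1 : r < 1)
    (hφ : DifferentiableOn ℂ φ (hartogsFigure ε)) :
    EqOn (hartogsExtension r φ) φ (hartogsFigure ε) := by
  intro p hp
  unfold hartogsExtension
  split_ifs with hpr
  · exact cauchyIntegralSnd_eq hε hr hr1 hφ hp hpr
  · rfl

theorem hartogsExtension_eventuallyEq_of_mem (hε : 0 < ε) (hr : 1 - ε < r) (hr1 : r < 1)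
    (hφ : DifferentiableOn ℂ φ (hartogsFigure ε)) {p : ℂ × ℂ} (hp : p ∈ hartogsFigure ε) :
    hartogsExtension r φ =ᶠ[𝓝 p] φ :=
  eventually_of_mem ((isOpen_hartogsFigure ε).mem_nhds hp) (hartogsExtension_eqOn hε hr hr1 hφ)

theorem hartogsExtension_eventuallyEq_of_norm_snd_lt {p : ℂ × ℂ} (hp : ‖p.2‖ < r) :
    hartogsExtension r φ =ᶠ[𝓝 p] cauchyIntegralSnd r φ := by
  have hopen : IsOpen {q : ℂ × ℂ | ‖q.2‖ < r} := isOpen_lt (by fun_prop) continuous_const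
  filter_upwards [hopen.mem_nhds hp] with q hq
  exact if_pos hq

theorem mem_hartogsFigure_of_not_norm_snd_lt (hr : 1 - ε < r) {p : ℂ × ℂ} (hp : p ∈ bidisk)
    (hpr : ¬‖p.2‖ < r) : p ∈ hartogsFigure ε :=
  ⟨hp, Or.inr (by linarith [not_lt.1 hpr])⟩

theorem differentiableOn_hartogsExtension (hε : 0 < ε) (hr : 1 - ε < r) (hr1 : r < 1)
    (hφ : DifferentiableOn ℂ φ (hartogsFigure ε)) :
    DifferentiableOn ℂ (hartogsExtension r φ) bidisk := by
  intro p hp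
  refine DifferentiableAt.differentiableWithinAt ?_
  by_cases hpr : ‖p.2‖ < r
  · exact (hasFDerivAt_cauchyIntegralSnd hr hr1 hφ hp.1 hpr).differentiableAt.congr_of_eventuallyEq
      (hartogsExtension_eventuallyEq_of_norm_snd_lt hpr)
  · have hpH := mem_hartogsFigure_of_not_norm_snd_lt hr hp hpr
    exact (hφ.differentiableAt ((isOpen_hartogsFigure ε).mem_nhds hpH)).congr_of_eventuallyEq
      (hartogsExtension_eventuallyEq_of_mem hε hr hr1 hφ hpH)

theorem deriv_snd_cauchyIntegralSnd_eq_deriv_fst {f g : ℂ × ℂ → ℂ} (hr : 1 - ε < r) (hr1 : r < 1)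
    (hf : DifferentiableOn ℂ f (hartogsFigure ε)) (hg : DifferentiableOn ℂ g (hartogsFigure ε))
    (hclosed : ∀ p ∈ hartogsFigure ε,
      deriv (fun w => f (p.1, w)) p.2 = deriv (fun z => g (z, p.2)) p.1)
    (hz : ‖z‖ < 1) (hw : ‖w‖ < r) :
    deriv (fun w' => cauchyIntegralSnd r f (z, w')) w =
      deriv (fun z' => cauchyIntegralSnd r g (z', w)) z := by
  rw [(hasFDerivAt_cauchyIntegralSnd hr hr1 hf hz hw).hasDerivAt_comp_const_prodMk.deriv,
    (hasFDerivAt_cauchyIntegralSnd hr hr1 hg hz hw).hasDerivAt_comp_prodMk_const.deriv]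
  have hr0 : 0 ≤ r := (norm_nonneg w).trans hw.le
  have hslice : DifferentiableOn ℂ (fun ζ => f (z, ζ)) {ζ | (z, ζ) ∈ hartogsFigure ε} :=
    hf.comp (by fun_prop) fun _ hζ => hζ
  have hparts := circleIntegral_sub_inv_smul_deriv
    ((isOpen_hartogsFigure ε).preimage (by fun_prop)) hslice hr0
    (fun ζ hζ => prod_sphere_subset_hartogsFigure hr hr1 hz (mk_mem_prod (mem_singleton z) hζ))
    (fun hw' => (mem_sphere_zero_iff_norm.1 hw' ▸ hw).false)
  have hswap : EqOn (fun ζ => (ζ - w)⁻¹ • fderiv ℂ g (z, ζ) (1, 0))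
      (fun ζ => (ζ - w)⁻¹ • deriv (fun ζ => f (z, ζ)) ζ) (sphere 0 r) := by
    intro ζ hζ
    have hH := prod_sphere_subset_hartogsFigure hr hr1 hz (mk_mem_prod (mem_singleton z) hζ)
    simp only
    rw [hclosed _ hH, ← ((hg.differentiableAt ((isOpen_hartogsFigure ε).mem_nhds hH)).hasFDerivAt
      |>.hasDerivAt_comp_prodMk_const).deriv]
  rw [circleIntegral.integral_congr hr0 hswap, hparts]
  simp

end HartogsFigure

theorem hartogs_extension_closed_one_form_general (ε : ℝ) (hε0 : 0 < ε)
    (f g : ℂ × ℂ → ℂ)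
    (hf : DifferentiableOn ℂ f (hartogsFigure ε))
    (hg : DifferentiableOn ℂ g (hartogsFigure ε))
    (hclosed : ∀ p ∈ hartogsFigure ε,
      deriv (fun w => f (p.1, w)) p.2 = deriv (fun z => g (z, p.2)) p.1) :
    ∃ F G : ℂ × ℂ → ℂ,
      DifferentiableOn ℂ F bidisk ∧ DifferentiableOn ℂ G bidisk ∧
      (∀ p ∈ bidisk,
        deriv (fun w => F (p.1, w)) p.2 = deriv (fun z => G (z, p.2)) p.1) ∧
      Set.EqOn F f (hartogsFigure ε) ∧ Set.EqOn G g (hartogsFigure ε) := by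
  obtain ⟨r, hr, hr1⟩ : ∃ r, 1 - ε < r ∧ r < 1 := ⟨1 - ε / 2, by linarith, by linarith⟩
  refine ⟨hartogsExtension r f, hartogsExtension r g,
    differentiableOn_hartogsExtension hε0 hr hr1 hf,
    differentiableOn_hartogsExtension hε0 hr hr1 hg,
    fun p hp => ?_, hartogsExtension_eqOn hε0 hr hr1 hf, hartogsExtension_eqOn hε0 hr hr1 hg⟩
  by_cases hpr : ‖p.2‖ < r
  · rw [(hartogsExtension_eventuallyEq_of_norm_snd_lt hpr).deriv_comp_const_prodMk,
      (hartogsExtension_eventuallyEq_of_norm_snd_lt hpr).deriv_comp_prodMk_const]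
    exact deriv_snd_cauchyIntegralSnd_eq_deriv_fst hr hr1 hf hg hclosed hp.1 hpr
  · have hpH := mem_hartogsFigure_of_not_norm_snd_lt hr hp hpr
    rw [(hartogsExtension_eventuallyEq_of_mem hε0 hr hr1 hf hpH).deriv_comp_const_prodMk,
      (hartogsExtension_eventuallyEq_of_mem hε0 hr hr1 hg hpH).deriv_comp_prodMk_const]
    exact hclosed p hpH

/-- A closed holomorphic 1-form `f dz + g dw` on the Hartogs figure `H_ε` extends to a
closed holomorphic 1-form on the bidisk. -/
theorem hartogs_extension_closed_one_form (ε : ℝ) (hε0 : 0 < ε) (hε1 : ε < 1)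
    (f g : ℂ × ℂ → ℂ)
    (hf : DifferentiableOn ℂ f (hartogsFigure ε))
    (hg : DifferentiableOn ℂ g (hartogsFigure ε))
    (hclosed : ∀ p ∈ hartogsFigure ε,
      deriv (fun w => f (p.1, w)) p.2 = deriv (fun z => g (z, p.2)) p.1) :
    ∃ F G : ℂ × ℂ → ℂ,
      DifferentiableOn ℂ F bidisk ∧ DifferentiableOn ℂ G bidisk ∧
      (∀ p ∈ bidisk,
        deriv (fun w => F (p.1, w)) p.2 = deriv (fun z => G (z, p.2)) p.1) ∧
      Set.EqOn F f (hartogsFigure ε) ∧ Set.EqOn G g (hartogsFigure ε) :=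
  hartogs_extension_closed_one_form_general ε hε0 f g hf hg hclosed
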